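/- arXiv:2508.00854 — 6 statements merged into one kernel-verified Lean document; each statement's English description precedes it below -/
import Mathlib

section
/- Let $f : [a,b] \to \mathbb{R}$ be continuous, differentiable on $(a,p)$ and on $(p,b)$ where $a < p < b$, with $|f'| \le M_1$ on $(a,p)$ and $|f'| \le M_2$ on $(p,b)$. Then $\left| f(p) - \frac{1}{b-a}\int_a^b f(t)\,dt \right| \le \frac{1}{2}\max\{ (p-a) M_1, (b-p) M_2 \}$. -/
theorem ostrowski_refinement_key (a b p M₁ M₂ : ℝ) (f f' : ℝ → ℝ)
    (hap : a < p) (hpb : p < b) (hM₁ : 0 ≤ M₁) (hM₂ : 0 ≤ M₂)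
    (hf : ContinuousOn f (Set.Icc a b))
    (hderiv₁ : ∀ t ∈ Set.Ioo a p, HasDerivAt f (f' t) t)
    (hbound₁ : ∀ t ∈ Set.Ioo a p, |f' t| ≤ M₁)
    (hderiv₂ : ∀ t ∈ Set.Ioo p b, HasDerivAt f (f' t) t)
    (hbound₂ : ∀ t ∈ Set.Ioo p b, |f' t| ≤ M₂) :
    |f p - (1 / (b - a)) * ∫ t in a..b, f t| ≤
      (1 / 2) * max ((p - a) * M₁) ((b - p) * M₂) := by
  have hab : a < b := hap.trans hpb
  have hf1 : ContinuousOn f (Set.Icc a p) := hf.mono (Set.Icc_subset_Icc le_rfl hpb.le)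
  have hf2 : ContinuousOn f (Set.Icc p b) := hf.mono (Set.Icc_subset_Icc hap.le le_rfl)
  -- pointwise Lipschitz-type bounds via MVT
  have h1 : ∀ t ∈ Set.Icc a p, |f p - f t| ≤ M₁ * (p - t) := by
    intro t ht
    rcases eq_or_lt_of_le ht.2 with h | h
    · subst h; simp
    · obtain ⟨c, hc, hceq⟩ := exists_hasDerivAt_eq_slope f f' h
        (hf1.mono (Set.Icc_subset_Icc ht.1 le_rfl))
        (fun x hx => hderiv₁ x ⟨lt_of_le_of_lt ht.1 hx.1, hx.2⟩)
      have hc' : c ∈ Set.Ioo a p := ⟨lt_of_le_of_lt ht.1 hc.1, hc.2⟩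
      have : f p - f t = f' c * (p - t) := by
        have hne : p - t ≠ 0 := ne_of_gt (by linarith)
        field_simp [hne] at hceq; linarith [hceq]
      rw [this, abs_mul, abs_of_nonneg (by linarith : (0:ℝ) ≤ p - t)]
      exact mul_le_mul_of_nonneg_right (hbound₁ c hc') (by linarith)
  have h2 : ∀ t ∈ Set.Icc p b, |f p - f t| ≤ M₂ * (t - p) := by
    intro t ht
    rcases eq_or_lt_of_le ht.1 with h | h
    · subst h; simp
    · obtain ⟨c, hc, hceq⟩ := exists_hasDerivAt_eq_slope f f' h
        (hf2.mono (Set.Icc_subset_Icc le_rfl ht.2))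
        (fun x hx => hderiv₂ x ⟨hx.1, lt_of_lt_of_le hx.2 ht.2⟩)
      have hc' : c ∈ Set.Ioo p b := ⟨hc.1, lt_of_lt_of_le hc.2 ht.2⟩
      have : f p - f t = -(f' c * (t - p)) := by
        have hne : t - p ≠ 0 := ne_of_gt (by linarith)
        field_simp [hne] at hceq; linarith [hceq]
      rw [this, abs_neg, abs_mul, abs_of_nonneg (by linarith : (0:ℝ) ≤ t - p)]
      exact mul_le_mul_of_nonneg_right (hbound₂ c hc') (by linarith)
  -- integrability
  have hba : b - a ≠ 0 := by linarith
  have hfi : IntervalIntegrable f MeasureTheory.volume a b :=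
    hf.intervalIntegrable_of_Icc hab.le
  have hg1 : IntervalIntegrable (fun t => f p - f t) MeasureTheory.volume a p :=
    (continuousOn_const.sub hf1).intervalIntegrable_of_Icc hap.le
  have hg2 : IntervalIntegrable (fun t => f p - f t) MeasureTheory.volume p b :=
    (continuousOn_const.sub hf2).intervalIntegrable_of_Icc hpb.le
  -- integral bounds on each piece
  have key1 : |∫ t in a..p, (f p - f t)| ≤ M₁ * (p - a) ^ 2 / 2 := by
    have hb : |∫ t in a..p, (f p - f t)| ≤ ∫ t in a..p, M₁ * (p - t) := by
      apply intervalIntegral.abs_integral_le_integral_abs hap.le |>.trans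
      apply intervalIntegral.integral_mono_on hap.le hg1.abs
      · exact (continuous_const.mul (continuous_const.sub continuous_id)).intervalIntegrable _ _
      · exact h1
    have hc : (∫ t in a..p, M₁ * (p - t)) = M₁ * (p - a) ^ 2 / 2 := by
      rw [intervalIntegral.integral_const_mul]
      rw [intervalIntegral.integral_sub intervalIntegrable_const
        (intervalIntegral.intervalIntegrable_id)]
      simp [integral_id]
      ring
    linarith [hb, hc ▸ hb]
  have key2 : |∫ t in p..b, (f p - f t)| ≤ M₂ * (b - p) ^ 2 / 2 := by
    have hb : |∫ t in p..b, (f p - f t)| ≤ ∫ t in p..b, M₂ * (t - p) := by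
      apply intervalIntegral.abs_integral_le_integral_abs hpb.le |>.trans
      apply intervalIntegral.integral_mono_on hpb.le hg2.abs
      · exact (continuous_const.mul (continuous_id.sub continuous_const)).intervalIntegrable _ _
      · exact h2
    have hc : (∫ t in p..b, M₂ * (t - p)) = M₂ * (b - p) ^ 2 / 2 := by
      rw [intervalIntegral.integral_const_mul]
      rw [intervalIntegral.integral_sub (intervalIntegral.intervalIntegrable_id)
        intervalIntegrable_const]
      simp [integral_id]
      ring
    linarith [hc ▸ hb]
  -- rewrite LHS
  have split : (∫ t in a..b, (f p - f t)) =
      (∫ t in a..p, (f p - f t)) + ∫ t in p..b, (f p - f t) :=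
    (intervalIntegral.integral_add_adjacent_intervals hg1 hg2).symm
  have hrw : f p - (1 / (b - a)) * ∫ t in a..b, f t
      = (1 / (b - a)) * ∫ t in a..b, (f p - f t) := by
    rw [intervalIntegral.integral_sub intervalIntegrable_const hfi,
      intervalIntegral.integral_const]
    field_simp
    ring
  rw [hrw, abs_mul, abs_of_nonneg (one_div_nonneg.mpr (by linarith : (0:ℝ) ≤ b - a))]
  have habs : |∫ t in a..b, (f p - f t)| ≤ M₁ * (p - a) ^ 2 / 2 + M₂ * (b - p) ^ 2 / 2 := by
    rw [split]
    exact (abs_add_le _ _).trans (add_le_add key1 key2)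
  have hKle : M₁ * (p - a) ^ 2 / 2 + M₂ * (b - p) ^ 2 / 2
      ≤ (1 / 2) * max ((p - a) * M₁) ((b - p) * M₂) * (b - a) := by
    have k1 : (p - a) * M₁ ≤ max ((p - a) * M₁) ((b - p) * M₂) := le_max_left _ _
    have k2 : (b - p) * M₂ ≤ max ((p - a) * M₁) ((b - p) * M₂) := le_max_right _ _
    nlinarith [k1, k2, sq_nonneg (p - a), sq_nonneg (b - p)]
  calc (1 / (b - a)) * |∫ t in a..b, (f p - f t)|
      ≤ (1 / (b - a)) * ((1 / 2) * max ((p - a) * M₁) ((b - p) * M₂) * (b - a)) := by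
        exact mul_le_mul_of_nonneg_left (habs.trans hKle)
          (one_div_nonneg.mpr (by linarith : (0:ℝ) ≤ b - a))
    _ = (1 / 2) * max ((p - a) * M₁) ((b - p) * M₂) * ((b - a) / (b - a)) := by ring
    _ = (1 / 2) * max ((p - a) * M₁) ((b - p) * M₂) := by rw [div_self hba, mul_one]
end

section
/- Let $f : [a,b] \to \mathbb{R}$ be differentiable with $|f'(t)| \le M$ for all $t \in (a,b)$. Then for any $p \in (a,b)$, $\left| f(p) - \frac{1}{b-a}\int_a^b f(t)\,dt \right| \le \frac{(p-a)^2 + (b-p)^2}{2(b-a)} M$. -/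
/-!
`(b - a) f p - ∫ f = ∫ (f p - f t) dt`, and by the mean value theorem `|f t - f p| ≤ M |t - p|`;
integrating `|t - p|` over `[a, b]` (split at `p`) gives `((p - a)² + (b - p)²) / 2`.
-/

open Set intervalIntegral

namespace Ostrowski

theorem integral_abs_sub_left {a b : ℝ} (hab : a ≤ b) :
    ∫ t in a..b, |t - a| = (b - a) ^ 2 / 2 := by
  have hpos : EqOn (fun t => |t - a|) (fun t => t - a) (uIcc a b) := fun t ht => by
    rw [uIcc_of_le hab] at ht
    exact abs_of_nonneg (sub_nonneg.2 ht.1)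
  rw [integral_congr hpos, integral_comp_sub_right (fun x => x), integral_id]
  ring

theorem integral_abs_sub_right {a b : ℝ} (hab : a ≤ b) :
    ∫ t in a..b, |t - b| = (b - a) ^ 2 / 2 := by
  have hneg : EqOn (fun t => |t - b|) (fun t => b - t) (uIcc a b) := fun t ht => by
    rw [uIcc_of_le hab] at ht
    exact abs_of_nonpos (sub_nonpos.2 ht.2) |>.trans (neg_sub t b)
  rw [integral_congr hneg, integral_comp_sub_left (fun x => x), integral_id]
  ring

theorem integral_abs_sub_of_mem_Icc {a b p : ℝ} (hp : p ∈ Icc a b) :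
    ∫ t in a..b, |t - p| = ((p - a) ^ 2 + (b - p) ^ 2) / 2 := by
  have hint : ∀ u v : ℝ, IntervalIntegrable (fun t => |t - p|) MeasureTheory.volume u v :=
    fun u v => (continuous_id.sub continuous_const).abs.intervalIntegrable u v
  rw [← integral_add_adjacent_intervals (hint a p) (hint p b),
    integral_abs_sub_right hp.1, integral_abs_sub_left hp.2]
  ring

theorem abs_integral_sub_mul_le {a b p M : ℝ} {f : ℝ → ℝ} (hab : a ≤ b) (hp : p ∈ Icc a b)
    (hf : IntervalIntegrable f MeasureTheory.volume a b)
    (hlip : ∀ t ∈ Ioo a b, |f t - f p| ≤ M * |t - p|) :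
    |(∫ t in a..b, f t) - (b - a) * f p| ≤ M * (((p - a) ^ 2 + (b - p) ^ 2) / 2) :=
  calc |(∫ t in a..b, f t) - (b - a) * f p| = |∫ t in a..b, (f t - f p)| := by
        rw [integral_sub hf intervalIntegrable_const, integral_const, smul_eq_mul]
    _ ≤ ∫ t in a..b, |f t - f p| := abs_integral_le_integral_abs hab
    _ ≤ ∫ t in a..b, M * |t - p| :=
        integral_mono_on_of_le_Ioo hab (hf.sub intervalIntegrable_const).abs
          ((continuous_const.mul (continuous_id.sub continuous_const).abs).intervalIntegrable a b)
          hlip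
    _ = M * (((p - a) ^ 2 + (b - p) ^ 2) / 2) := by
        rw [integral_const_mul, integral_abs_sub_of_mem_Icc hp]

end Ostrowski

open Ostrowski

theorem ostrowski_classical_general (a b M : ℝ) (f f' : ℝ → ℝ)
    (hab : a < b)
    (hderiv : ∀ t ∈ Set.Icc a b, HasDerivAt f (f' t) t)
    (hbound : ∀ t ∈ Set.Ioo a b, |f' t| ≤ M) :
    ∀ p ∈ Set.Ioo a b,
      |f p - (1 / (b - a)) * ∫ t in a..b, f t| ≤
        ((p - a) ^ 2 + (b - p) ^ 2) / (2 * (b - a)) * M := by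
  intro p hp
  have hcont : ContinuousOn f (Icc a b) := fun t ht =>
    (hderiv t ht).continuousAt.continuousWithinAt
  have hlip : ∀ t ∈ Ioo a b, |f t - f p| ≤ M * |t - p| := fun t ht => by
    simpa only [Real.norm_eq_abs] using Convex.norm_image_sub_le_of_norm_hasDerivWithin_le
      (fun x hx => (hderiv x (Ioo_subset_Icc_self hx)).hasDerivWithinAt) hbound
      (convex_Ioo a b) hp ht
  have key := abs_integral_sub_mul_le hab.le (Ioo_subset_Icc_self hp)
    (hcont.intervalIntegrable_of_Icc hab.le) hlip
  have hba : 0 < b - a := sub_pos.2 hab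
  calc |f p - (1 / (b - a)) * ∫ t in a..b, f t|
        = |(∫ t in a..b, f t) - (b - a) * f p| / (b - a) := by
          rw [← abs_of_pos hba, ← abs_div, ← abs_neg, abs_of_pos hba]
          congr 1
          field_simp
          ring
    _ ≤ M * (((p - a) ^ 2 + (b - p) ^ 2) / 2) / (b - a) := by gcongr
    _ = ((p - a) ^ 2 + (b - p) ^ 2) / (2 * (b - a)) * M := by
          field_simp

theorem ostrowski_classical (a b M : ℝ) (f f' : ℝ → ℝ)
    (hab : a < b) (hM : 0 ≤ M)
    (hderiv : ∀ t ∈ Set.Icc a b, HasDerivAt f (f' t) t)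
    (hbound : ∀ t ∈ Set.Ioo a b, |f' t| ≤ M) :
    ∀ p ∈ Set.Ioo a b,
      |f p - (1 / (b - a)) * ∫ t in a..b, f t| ≤
        ((p - a) ^ 2 + (b - p) ^ 2) / (2 * (b - a)) * M :=
  ostrowski_classical_general a b M f f' hab hderiv hbound
end

section
/- Let $f : [a,b] \to \mathbb{R}$ be differentiable with $|f'(t)| \le M$ for all $t \in (a,b)$. Then for any $p \in (a,b)$, $\left| f(p) - \frac{1}{b-a}\int_a^b f(t)\,dt \right| \le \left[ \frac{1}{4} + \left( \frac{p - \frac{a+b}{2}}{b-a} \right)^2 \right] (b-a) M$. -/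
/-!
By the mean value theorem `f` is `M`-Lipschitz on `(a, b)`, so
`|f p - ⨍ f| ≤ (b - a)⁻¹ ∫ |f p - f t| dt ≤ M (b - a)⁻¹ ∫ |t - p| dt
  = M ((p - a)² + (b - p)²) / (2 (b - a))`,
and the last expression is the right-hand side written around the midpoint.
-/

open MeasureTheory intervalIntegral Set

theorem integral_abs_sub_of_mem_Icc {a b p : ℝ} (hp : p ∈ Icc a b) :
    ∫ t in a..b, |t - p| = ((p - a) ^ 2 + (b - p) ^ 2) / 2 := by
  have hcont : Continuous fun t : ℝ => |t - p| := by fun_prop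
  have left : ∫ t in a..p, |t - p| = (p - a) ^ 2 / 2 := by
    simpa [integral_of_le hp.1, uIoc_of_ge hp.1, abs_sub_comm a p, sq_abs, one_add_one_eq_two]
      using integral_pow_abs_sub_uIoc (a := p) (b := a) 1
  have right : ∫ t in p..b, |t - p| = (b - p) ^ 2 / 2 := by
    simpa [integral_of_le hp.2, uIoc_of_le hp.2, sq_abs, one_add_one_eq_two]
      using integral_pow_abs_sub_uIoc (a := p) (b := b) 1
  rw [← integral_add_adjacent_intervals (hcont.intervalIntegrable a p)
    (hcont.intervalIntegrable p b), left, right, add_div]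

theorem abs_sub_average_le {a b c : ℝ} {f g : ℝ → ℝ} (hab : a < b)
    (hf : IntervalIntegrable f volume a b) (hg : IntervalIntegrable g volume a b)
    (hle : ∀ t ∈ Ioo a b, |c - f t| ≤ g t) :
    |c - (1 / (b - a)) * ∫ t in a..b, f t| ≤ (1 / (b - a)) * ∫ t in a..b, g t := by
  have hba : 0 < b - a := sub_pos.2 hab
  have hint : c - (1 / (b - a)) * ∫ t in a..b, f t =
      (1 / (b - a)) * ∫ t in a..b, (c - f t) := by
    rw [integral_sub intervalIntegrable_const hf, intervalIntegral.integral_const, smul_eq_mul]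
    field_simp
  have hae : ∀ᵐ t, t ∈ Ioc a b → ‖c - f t‖ ≤ g t := by
    filter_upwards [Measure.ae_ne volume b] with t htb ht
    exact hle t ⟨ht.1, lt_of_le_of_ne ht.2 htb⟩
  rw [hint, abs_mul, abs_of_pos (one_div_pos.2 hba)]
  exact mul_le_mul_of_nonneg_left
    (norm_integral_le_of_norm_le hab.le hae hg) (one_div_nonneg.2 hba.le)

theorem ostrowski_classical_midpoint_form_general (a b M : ℝ) (f f' : ℝ → ℝ)
    (hab : a < b)
    (hderiv : ∀ t ∈ Set.Icc a b, HasDerivAt f (f' t) t)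
    (hbound : ∀ t ∈ Set.Ioo a b, |f' t| ≤ M) :
    ∀ p ∈ Set.Ioo a b,
      |f p - (1 / (b - a)) * ∫ t in a..b, f t| ≤
        (1 / 4 + ((p - (a + b) / 2) / (b - a)) ^ 2) * (b - a) * M := by
  intro p hp
  have hf : IntervalIntegrable f volume a b :=
    ContinuousOn.intervalIntegrable fun t ht =>
      (hderiv t (uIcc_of_le hab.le ▸ ht)).continuousAt.continuousWithinAt
  have hg : IntervalIntegrable (fun t => M * |t - p|) volume a b :=
    (by fun_prop : Continuous fun t => M * |t - p|).intervalIntegrable a b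
  have hlip : ∀ t ∈ Ioo a b, |f p - f t| ≤ M * |t - p| := fun t ht => by
    simpa only [Real.norm_eq_abs, abs_sub_comm t p] using
      (convex_Ioo a b).norm_image_sub_le_of_norm_hasDerivWithin_le
        (fun x hx => (hderiv x (Ioo_subset_Icc_self hx)).hasDerivWithinAt) hbound ht hp
  have hba : b - a ≠ 0 := (sub_pos.2 hab).ne'
  calc |f p - (1 / (b - a)) * ∫ t in a..b, f t|
      ≤ (1 / (b - a)) * ∫ t in a..b, M * |t - p| := abs_sub_average_le hab hf hg hlip
    _ = (1 / 4 + ((p - (a + b) / 2) / (b - a)) ^ 2) * (b - a) * M := by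
        rw [intervalIntegral.integral_const_mul,
          integral_abs_sub_of_mem_Icc (Ioo_subset_Icc_self hp)]
        field_simp
        ring

theorem ostrowski_classical_midpoint_form (a b M : ℝ) (f f' : ℝ → ℝ)
    (hab : a < b) (hM : 0 ≤ M)
    (hderiv : ∀ t ∈ Set.Icc a b, HasDerivAt f (f' t) t)
    (hbound : ∀ t ∈ Set.Ioo a b, |f' t| ≤ M) :
    ∀ p ∈ Set.Ioo a b,
      |f p - (1 / (b - a)) * ∫ t in a..b, f t| ≤
        (1 / 4 + ((p - (a + b) / 2) / (b - a)) ^ 2) * (b - a) * M :=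
  ostrowski_classical_midpoint_form_general a b M f f' hab hderiv hbound
end

section
/- Let $0 < a < b$. Define $\mathscr{A} = \frac{a+b}{2}$ and $\mathscr{L} = \frac{b-a}{\ln b - \ln a}$. Then $0 \le \mathscr{A} - \mathscr{L} \le \frac{\mathscr{A}\,\mathscr{L}\,(b-a)}{4 a^2}$. -/
/-!
Integrating `1 / t` over `[a, b]` gives `log b - log a = (b - a) / 𝓛`, so `1 / 𝓛` is the mean of
`1 / t` on `[a, b]`. Convexity of `1 / t` (the midpoint half of the Hermite–Hadamard inequality)
gives `1 / 𝓐 ≤ 1 / 𝓛`, and Ostrowski's inequality at the midpoint, with the Lipschitz constant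
`1 / a²` of `1 / t` on `[a, b]`, gives `1 / 𝓛 - 1 / 𝓐 ≤ (b - a) / (4 a²)`. Both bounds follow from
`𝓐 - 𝓛 = 𝓐 𝓛 (1 / 𝓛 - 1 / 𝓐)`.
-/

open Set intervalIntegral
open MeasureTheory (volume ae_of_all)

theorem ConvexOn.sub_mul_apply_midpoint_le_integral {f : ℝ → ℝ} {a b : ℝ} (hab : a ≤ b)
    (hf : ConvexOn ℝ (Icc a b) f) (hfi : IntervalIntegrable f volume a b) :
    (b - a) * f ((a + b) / 2) ≤ ∫ x in a..b, f x := by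
  have hfi' : IntervalIntegrable (fun x ↦ f (a + b - x)) volume a b := by
    simpa using (hfi.comp_sub_left (a + b)).symm
  have hrefl : ∫ x in a..b, f (a + b - x) = ∫ x in a..b, f x := by
    simp [integral_comp_sub_left]
  calc (b - a) * f ((a + b) / 2) = ∫ _ in a..b, f ((a + b) / 2) := by simp
    _ ≤ ∫ x in a..b, (f x + f (a + b - x)) / 2 := by
      refine integral_mono_on hab intervalIntegrable_const ((hfi.add hfi').div_const 2) ?_
      intro x hx
      have hx' : a + b - x ∈ Icc a b := ⟨by linarith [hx.2], by linarith [hx.1]⟩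
      have := hf.2 hx hx' (by norm_num : (0 : ℝ) ≤ 1 / 2) (by norm_num : (0 : ℝ) ≤ 1 / 2)
        (by norm_num)
      have hmid : (1 / 2 : ℝ) • x + (1 / 2 : ℝ) • (a + b - x) = (a + b) / 2 := by
        simp only [smul_eq_mul]; ring
      rw [hmid, smul_eq_mul, smul_eq_mul] at this
      linarith
    _ = ∫ x in a..b, f x := by
      rw [integral_div, integral_add hfi hfi', hrefl]; ring

theorem integral_abs_sub_eq {a b p : ℝ} (hap : a ≤ p) (hpb : p ≤ b) :
    ∫ t in a..b, |t - p| = ((p - a) ^ 2 + (b - p) ^ 2) / 2 := by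
  have hcont : Continuous fun t : ℝ ↦ |t - p| := by fun_prop
  rw [← integral_add_adjacent_intervals (b := p) (hcont.intervalIntegrable _ _)
    (hcont.intervalIntegrable _ _)]
  have hleft : ∫ t in a..p, |t - p| = ∫ t in a..p, (p - t) :=
    integral_congr fun t ht ↦ by
      rw [uIcc_of_le hap] at ht; rw [abs_of_nonpos (by linarith [ht.2])]; ring
  have hright : ∫ t in p..b, |t - p| = ∫ t in p..b, (t - p) :=
    integral_congr fun t ht ↦ by
      rw [uIcc_of_le hpb] at ht; rw [abs_of_nonneg (by linarith [ht.1])]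
  rw [hleft, hright, integral_sub intervalIntegrable_const intervalIntegrable_id,
    integral_sub intervalIntegrable_id intervalIntegrable_const]
  simp only [integral_const, integral_id, smul_eq_mul]
  ring

theorem abs_integral_sub_mul_le_of_abs_sub_le {f : ℝ → ℝ} {a b p M : ℝ} (hap : a ≤ p)
    (hpb : p ≤ b) (hfi : IntervalIntegrable f volume a b)
    (hM : ∀ t ∈ Icc a b, |f t - f p| ≤ M * |t - p|) :
    |(∫ t in a..b, f t) - (b - a) * f p| ≤ M * ((p - a) ^ 2 + (b - p) ^ 2) / 2 := by
  have hsub : (∫ t in a..b, f t) - (b - a) * f p = ∫ t in a..b, (f t - f p) := by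
    rw [integral_sub hfi intervalIntegrable_const, integral_const, smul_eq_mul]
  rw [hsub, ← Real.norm_eq_abs]
  calc ‖∫ t in a..b, (f t - f p)‖ ≤ ∫ t in a..b, M * |t - p| :=
        norm_integral_le_of_norm_le (hap.trans hpb)
          (ae_of_all _ fun t ht ↦ hM t (Ioc_subset_Icc_self ht))
          (by apply Continuous.intervalIntegrable; fun_prop)
    _ = M * ((p - a) ^ 2 + (b - p) ^ 2) / 2 := by
      rw [integral_const_mul, integral_abs_sub_eq hap hpb, mul_div_assoc]

theorem abs_inv_sub_inv_le {a x y : ℝ} (ha : 0 < a) (hx : a ≤ x) (hy : a ≤ y) :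
    |x⁻¹ - y⁻¹| ≤ (a ^ 2)⁻¹ * |x - y| := by
  have hx0 : 0 < x := ha.trans_le hx
  have hy0 : 0 < y := ha.trans_le hy
  rw [inv_sub_inv hx0.ne' hy0.ne', abs_div, abs_sub_comm, abs_of_pos (mul_pos hx0 hy0),
    div_eq_inv_mul, sq]
  gcongr

theorem intervalIntegrable_inv_of_pos {a b : ℝ} (ha : 0 < a) (hb : 0 < b) :
    IntervalIntegrable (fun t : ℝ ↦ t⁻¹) volume a b :=
  intervalIntegrable_inv_iff.2 <| .inr fun h ↦ (lt_inf_iff.2 ⟨ha, hb⟩).not_ge h.1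

theorem inv_midpoint_le_log_sub_log_div {a b : ℝ} (ha : 0 < a) (hab : a < b) :
    ((a + b) / 2)⁻¹ ≤ (Real.log b - Real.log a) / (b - a) := by
  have hb : 0 < b := ha.trans hab
  have hconv : ConvexOn ℝ (Icc a b) fun t : ℝ ↦ t⁻¹ := by
    simpa using (convexOn_zpow (-1)).subset (fun x hx ↦ ha.trans_le hx.1) (convex_Icc a b)
  have h := hconv.sub_mul_apply_midpoint_le_integral hab.le (intervalIntegrable_inv_of_pos ha hb)
  rw [integral_inv_of_pos ha hb, Real.log_div hb.ne' ha.ne'] at h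
  rwa [le_div_iff₀ (sub_pos.2 hab), mul_comm]

theorem log_sub_log_div_sub_inv_midpoint_le {a b : ℝ} (ha : 0 < a) (hab : a < b) :
    (Real.log b - Real.log a) / (b - a) - ((a + b) / 2)⁻¹ ≤ (b - a) / (4 * a ^ 2) := by
  have hb : 0 < b := ha.trans hab
  have h := abs_integral_sub_mul_le_of_abs_sub_le (p := (a + b) / 2) (by linarith) (by linarith)
    (intervalIntegrable_inv_of_pos ha hb) fun t ht ↦ abs_inv_sub_inv_le ha ht.1 (by linarith)
  rw [integral_inv_of_pos ha hb, Real.log_div hb.ne' ha.ne'] at h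
  have hba : 0 < b - a := sub_pos.2 hab
  rw [div_sub' hba.ne', div_le_iff₀ hba]
  calc _ ≤ _ := (le_abs_self _).trans h
    _ = _ := by field_simp; ring

theorem arith_sub_log_mean_bound (a b : ℝ) (ha : 0 < a) (hab : a < b) :
    0 ≤ (a + b) / 2 - (b - a) / (Real.log b - Real.log a) ∧
    (a + b) / 2 - (b - a) / (Real.log b - Real.log a) ≤
      ((a + b) / 2) * ((b - a) / (Real.log b - Real.log a)) * (b - a) / (4 * a ^ 2) := by
  have hlow := inv_midpoint_le_log_sub_log_div ha hab
  have hup := log_sub_log_div_sub_inv_midpoint_le ha hab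
  have hA : 0 < (a + b) / 2 := by linarith
  set A := (a + b) / 2
  set L := (b - a) / (Real.log b - Real.log a) with hL
  rw [← inv_div, ← hL] at hlow hup
  have hL0 : 0 < L := inv_pos.1 ((inv_pos.2 hA).trans_le hlow)
  have hsplit : A - L = A * L * (L⁻¹ - A⁻¹) := by field_simp
  rw [hsplit, mul_div_assoc]
  exact ⟨mul_nonneg (mul_pos hA hL0).le (sub_nonneg.2 hlow), by gcongr⟩
end

section
/- Let $0 < a < b$. Define $\mathscr{G} = \sqrt{ab}$, $\mathscr{A} = \frac{a+b}{2}$, and $\mathscr{L} = \frac{b-a}{\ln b - \ln a}$. Then $0 \le \mathscr{L} - \mathscr{G} \le \min\left\{ \frac{\mathscr{G}\mathscr{L}(b-a)}{a^2}\left[\frac{1}{4} + \left(\frac{\mathscr{G}-\mathscr{A}}{b-a}\right)^2\right],\ \frac{\mathscr{G}-a}{2a^2}\,\mathscr{G}\mathscr{L} \right\}$. -/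
/-! With `G = √(ab)` and `L` the logarithmic mean, `L - G = G L (1/G - 1/L)`, where
`1/L = (log b - log a)/(b - a)` is the mean value of `1/t` on `[a, b]`. Since
`log b - log a = 2 log (G/a)`, the bounds `1 - 1/t ≤ log t ≤ (t - 1/t)/2` at `t = G/a ≥ 1` give
`0 ≤ 1/G - 1/L ≤ (G - a)/(G(G + a)) ≤ (G - a)/(2a²)`. The Ostrowski bound
`(b - a)/a² · (1/4 + ((G - A)/(b - a))²)` dominates the last one because `G ≤ A`. -/

namespace Real

variable {a b : ℝ}

lemma two_mul_log_le_sub_inv {t : ℝ} (ht : 1 ≤ t) : 2 * log t ≤ t - t⁻¹ := by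
  have h := self_le_sinh_iff.mpr (log_nonneg ht)
  rw [sinh_log (by linarith)] at h
  linarith

lemma log_sub_log_eq_two_mul_log_sqrt_mul_div (ha : 0 < a) (hb : 0 < b) :
    log b - log a = 2 * log (√(a * b) / a) := by
  rw [log_div (by positivity) ha.ne', log_sqrt (by positivity), log_mul ha.ne' hb.ne']
  ring

lemma log_sub_log_le_div_sqrt_mul (ha : 0 < a) (hab : a ≤ b) :
    log b - log a ≤ (b - a) / √(a * b) := by
  have hb : 0 < b := ha.trans_le hab
  have hag : a ≤ √(a * b) := by
    rw [le_sqrt ha.le (by positivity)]; nlinarith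
  rw [log_sub_log_eq_two_mul_log_sqrt_mul_div ha hb]
  calc 2 * log (√(a * b) / a) ≤ √(a * b) / a - (√(a * b) / a)⁻¹ :=
        two_mul_log_le_sub_inv ((one_le_div ha).mpr hag)
    _ = (b - a) / √(a * b) := by
        field_simp
        rw [sq_sqrt (by positivity)]
        ring

lemma two_mul_one_sub_div_sqrt_mul_le_log_sub_log (ha : 0 < a) (hb : 0 < b) :
    2 * (1 - a / √(a * b)) ≤ log b - log a := by
  rw [log_sub_log_eq_two_mul_log_sqrt_mul_div ha hb, ← inv_div]
  have := one_sub_inv_le_log_of_pos (show 0 < √(a * b) / a by positivity)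
  linarith

noncomputable def logMean (a b : ℝ) : ℝ := (b - a) / (log b - log a)

lemma inv_logMean (a b : ℝ) : (logMean a b)⁻¹ = (log b - log a) / (b - a) := inv_div _ _

lemma logMean_pos (ha : 0 < a) (hab : a < b) : 0 < logMean a b :=
  div_pos (sub_pos.mpr hab) (sub_pos.mpr (log_lt_log ha hab))

lemma sqrt_mul_le_logMean (ha : 0 < a) (hab : a < b) : √(a * b) ≤ logMean a b := by
  have hg : 0 < √(a * b) := sqrt_pos.mpr (mul_pos ha (ha.trans hab))
  rw [logMean, le_div_iff₀ (sub_pos.mpr (log_lt_log ha hab)), ← le_div_iff₀' hg]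
  exact log_sub_log_le_div_sqrt_mul ha hab.le

lemma inv_sqrt_mul_sub_inv_logMean_le (ha : 0 < a) (hab : a < b) :
    (√(a * b))⁻¹ - (logMean a b)⁻¹ ≤ (√(a * b) - a) / (2 * a ^ 2) := by
  have hb : 0 < b := ha.trans hab
  set g := √(a * b) with hg
  have hg2 : g ^ 2 = a * b := sq_sqrt (by positivity)
  have hag : a < g := by rw [hg, lt_sqrt ha.le]; nlinarith
  have hb' : b - a = (g - a) * (g + a) / a := by field_simp; nlinarith
  have hg0 : 0 < g := ha.trans hag
  have hga : g - a ≠ 0 := by linarith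
  calc g⁻¹ - (logMean a b)⁻¹ ≤ g⁻¹ - 2 * (1 - a / g) / (b - a) := by
        rw [inv_logMean]
        gcongr g⁻¹ - ?_ / _
        exact two_mul_one_sub_div_sqrt_mul_le_log_sub_log ha hb
    _ = (g - a) / (g * (g + a)) := by
        rw [hb']; field_simp; ring
    _ ≤ (g - a) / (2 * a ^ 2) :=
        div_le_div_of_nonneg_left (sub_nonneg.mpr hag.le) (by positivity) (by nlinarith)

lemma sub_div_two_le_mul_quarter_add_sq {g : ℝ} (hab : a < b) (hg : g ≤ (a + b) / 2) :
    (g - a) / 2 ≤ (b - a) * (1 / 4 + ((g - (a + b) / 2) / (b - a)) ^ 2) := by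
  have hba : 0 < b - a := sub_pos.mpr hab
  rw [div_pow, ← sub_nonneg]
  have : (b - a) * (1 / 4 + (g - (a + b) / 2) ^ 2 / (b - a) ^ 2) - (g - a) / 2
      = (b - g) * (a + b - 2 * g) / (2 * (b - a)) := by field_simp; ring
  rw [this]
  apply div_nonneg _ (by positivity)
  apply mul_nonneg <;> linarith

end Real

open Real in
theorem log_sub_geom_mean_bound (a b : ℝ) (ha : 0 < a) (hab : a < b) :
    0 ≤ (b - a) / (Real.log b - Real.log a) - Real.sqrt (a * b) ∧
    (b - a) / (Real.log b - Real.log a) - Real.sqrt (a * b) ≤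
      min
        (Real.sqrt (a * b) * ((b - a) / (Real.log b - Real.log a)) * (b - a) / a ^ 2 *
          (1 / 4 + ((Real.sqrt (a * b) - (a + b) / 2) / (b - a)) ^ 2))
        ((Real.sqrt (a * b) - a) / (2 * a ^ 2) *
          (Real.sqrt (a * b) * ((b - a) / (Real.log b - Real.log a)))) := by
  rw [show (b - a) / (log b - log a) = logMean a b from rfl]
  set G := √(a * b)
  set L := logMean a b
  have hG : 0 < G := sqrt_pos.mpr (mul_pos ha (ha.trans hab))
  have hL : 0 < L := logMean_pos ha hab
  have hGA : G ≤ (a + b) / 2 := by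
    rw [sqrt_le_left (by linarith)]
    nlinarith [sq_nonneg (a - b)]
  have hdiff : L - G = G * L * (G⁻¹ - L⁻¹) := by field_simp
  have hbound : L - G ≤ (G - a) / (2 * a ^ 2) * (G * L) := by
    rw [hdiff, mul_comm]
    exact mul_le_mul_of_nonneg_right (inv_sqrt_mul_sub_inv_logMean_le ha hab) (by positivity)
  refine ⟨sub_nonneg.mpr (sqrt_mul_le_logMean ha hab), le_min (hbound.trans ?_) hbound⟩
  calc (G - a) / (2 * a ^ 2) * (G * L) = G * L / a ^ 2 * ((G - a) / 2) := by ring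
    _ ≤ G * L / a ^ 2 * ((b - a) * (1 / 4 + ((G - (a + b) / 2) / (b - a)) ^ 2)) := by
        gcongr; exact sub_div_two_le_mul_quarter_add_sq hab hGA
    _ = _ := by ring
end

section
/- Let $0 < a < b$, $f(t) = 1/t$, and $p \in (a,b)$. Then $\left| \frac{1}{p} - \frac{1}{\mathscr{L}} \right| \le \min\left\{ \frac{(p-a)^2 + (b-p)^2}{2(b-a)}\cdot\frac{1}{a^2},\ \frac{1}{2}\max\left\{ \frac{p-a}{a^2}, \frac{b-p}{p^2} \right\} \right\}$, where $\mathscr{L} = \frac{b-a}{\ln b - \ln a}$ is the logarithmic mean, so that $\frac{1}{b-a}\int_a^b \frac{dt}{t} = \frac{1}{\mathscr{L}}$. -/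
/-! On `[c, ∞)` the map `t ↦ t⁻¹` is `c⁻²`-Lipschitz, and for a `K`-Lipschitz `f` on `[x, y]`
and `c ∈ [x, y]` one has the Ostrowski bound `‖∫ₓʸ f - (y - x) f(c)‖ ≤ K ∫ₓʸ |t - c| dt`.
Applied to `t⁻¹` on `[a, b]` at `c = p` with `K = a⁻²` this gives the first term of the minimum.
For the second, apply it separately on `[a, p]` (with `K = a⁻²`) and on `[p, b]` (with the
sharper `K = p⁻²`), both at the endpoint `p`, and add. -/

open Set intervalIntegral
open scoped NNReal

lemma integral_abs_sub_const {x y c : ℝ} (hxc : x ≤ c) (hcy : c ≤ y) :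
    ∫ t in x..y, |t - c| = ((c - x) ^ 2 + (y - c) ^ 2) / 2 := by
  have hint : ∀ u v : ℝ, IntervalIntegrable (fun t => |t - c|) MeasureTheory.volume u v :=
    fun u v => (continuous_abs.comp (continuous_sub_right c)).intervalIntegrable u v
  have hleft : ∫ t in x..c, |t - c| = ∫ t in x..c, (c - t) :=
    integral_congr fun t ht => by
      rw [uIcc_of_le hxc] at ht
      rw [abs_of_nonpos (by linarith [ht.2]), neg_sub]
  have hright : ∫ t in c..y, |t - c| = ∫ t in c..y, (t - c) :=
    integral_congr fun t ht => by
      rw [uIcc_of_le hcy] at ht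
      exact abs_of_nonneg (by linarith [ht.1])
  rw [← integral_add_adjacent_intervals (hint x c) (hint c y), hleft, hright,
    integral_sub intervalIntegrable_const intervalIntegrable_id,
    integral_sub intervalIntegrable_id intervalIntegrable_const]
  simp only [integral_id, integral_const, smul_eq_mul]
  ring

theorem norm_integral_sub_smul_le_of_lipschitzOnWith {E : Type*} [NormedAddCommGroup E]
    [NormedSpace ℝ E] [CompleteSpace E] {f : ℝ → E} {K : ℝ≥0} {x y c : ℝ} (hxc : x ≤ c)
    (hcy : c ≤ y) (hf : LipschitzOnWith K f (Icc x y)) :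
    ‖(∫ t in x..y, f t) - (y - x) • f c‖ ≤ K * (((c - x) ^ 2 + (y - c) ^ 2) / 2) := by
  have hxy : x ≤ y := hxc.trans hcy
  have hfi : IntervalIntegrable f MeasureTheory.volume x y :=
    (hf.continuousOn.mono (uIcc_of_le hxy).subset).intervalIntegrable
  rw [← integral_const, ← integral_sub hfi intervalIntegrable_const,
    ← integral_abs_sub_const hxc hcy, ← integral_const_mul]
  refine norm_integral_le_of_norm_le hxy (.of_forall fun t ht => ?_)
    ((continuous_const.mul (continuous_abs.comp (continuous_sub_right c))).intervalIntegrable x y)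
  rw [← dist_eq_norm, ← Real.dist_eq]
  exact hf.dist_le_mul t (Ioc_subset_Icc_self ht) c ⟨hxc, hcy⟩

lemma lipschitzOnWith_inv_Ici {c : ℝ} (hc : 0 < c) :
    LipschitzOnWith (c ^ 2)⁻¹.toNNReal (fun t : ℝ => t⁻¹) (Ici c) := by
  refine LipschitzOnWith.of_dist_le' fun s (hs : c ≤ s) t (ht : c ≤ t) => ?_
  have hs0 : 0 < s := hc.trans_le hs
  have ht0 : 0 < t := hc.trans_le ht
  rw [Real.dist_eq, Real.dist_eq, inv_sub_inv hs0.ne' ht0.ne', abs_div,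
    abs_of_pos (mul_pos hs0 ht0), abs_sub_comm, div_eq_inv_mul]
  gcongr
  nlinarith

lemma abs_log_sub_log_sub_div_le {x y c m : ℝ} (hm : 0 < m) (hmx : m ≤ x) (hxc : x ≤ c)
    (hcy : c ≤ y) :
    |(Real.log y - Real.log x) - (y - x) / c| ≤ ((c - x) ^ 2 + (y - c) ^ 2) / (2 * m ^ 2) := by
  have hx : 0 < x := hm.trans_le hmx
  have hf : LipschitzOnWith (m ^ 2)⁻¹.toNNReal (fun t : ℝ => t⁻¹) (Icc x y) :=
    (lipschitzOnWith_inv_Ici hm).mono (Icc_subset_Ici_self.trans (Ici_subset_Ici.2 hmx))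
  have h := norm_integral_sub_smul_le_of_lipschitzOnWith hxc hcy hf
  rw [integral_inv_of_pos hx (by linarith), Real.log_div (by linarith) hx.ne', Real.norm_eq_abs,
    smul_eq_mul, ← div_eq_mul_inv, Real.coe_toNNReal _ (by positivity)] at h
  convert h using 1
  field_simp

lemma abs_inv_sub_inv_div_log_sub_log {a b p : ℝ} (hp : p ≠ 0) (hab : a < b) :
    |1 / p - 1 / ((b - a) / (Real.log b - Real.log a))| =
      |(Real.log b - Real.log a) - (b - a) / p| / (b - a) := by
  have hba : 0 < b - a := sub_pos.2 hab
  rw [one_div_div, abs_sub_comm, eq_div_iff hba.ne', ← abs_of_pos hba, ← abs_mul, abs_of_pos hba]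
  congr 1
  field_simp

lemma sq_div_add_sq_div_le_mul_max {u v α β : ℝ} (hu : 0 ≤ u) (hv : 0 ≤ v) (hα : 0 < α)
    (hβ : 0 < β) :
    u ^ 2 / (2 * α) + v ^ 2 / (2 * β) ≤ (u + v) / 2 * max (u / α) (v / β) := by
  have hl : u ^ 2 / (2 * α) ≤ u / 2 * max (u / α) (v / β) := by
    rw [show u ^ 2 / (2 * α) = u / 2 * (u / α) by field_simp]
    gcongr
    exact le_max_left _ _
  have hr : v ^ 2 / (2 * β) ≤ v / 2 * max (u / α) (v / β) := by
    rw [show v ^ 2 / (2 * β) = v / 2 * (v / β) by field_simp]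
    gcongr
    exact le_max_right _ _
  linarith

theorem inv_ostrowski_refined (a b p : ℝ) (ha : 0 < a) (hab : a < b)
    (hp : p ∈ Set.Ioo a b) :
    |1 / p - 1 / ((b - a) / (Real.log b - Real.log a))| ≤
      min (((p - a) ^ 2 + (b - p) ^ 2) / (2 * (b - a)) * (1 / a ^ 2))
        (1 / 2 * max ((p - a) / a ^ 2) ((b - p) / p ^ 2)) := by
  obtain ⟨hap, hpb⟩ := hp
  have hp0 : 0 < p := ha.trans hap
  have hba : 0 < b - a := by linarith
  rw [abs_inv_sub_inv_div_log_sub_log hp0.ne' hab]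
  refine le_min ?_ ?_
  · calc _ ≤ ((p - a) ^ 2 + (b - p) ^ 2) / (2 * a ^ 2) / (b - a) := by
          gcongr
          exact abs_log_sub_log_sub_div_le ha le_rfl hap.le hpb.le
      _ = _ := by field_simp
  · have hleft := abs_log_sub_log_sub_div_le ha le_rfl hap.le le_rfl
    have hright := abs_log_sub_log_sub_div_le hp0 le_rfl le_rfl hpb.le
    simp only [sub_self, zero_pow two_ne_zero, add_zero, zero_add] at hleft hright
    have hsplit : |(Real.log b - Real.log a) - (b - a) / p| ≤
        |(Real.log p - Real.log a) - (p - a) / p| + |(Real.log b - Real.log p) - (b - p) / p| :=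
      (abs_add_le _ _).trans_eq' (by ring_nf)
    have hmax := sq_div_add_sq_div_le_mul_max (sub_nonneg.2 hap.le) (sub_nonneg.2 hpb.le)
      (pow_pos ha 2) (pow_pos hp0 2)
    rw [div_le_iff₀ hba]
    linarith
end
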